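/- For every k ∈ ℤ≥0, the function P_{Γ,χ}f_{k,m} belongs to S_m(Γ,η,χ): it is holomorphic on ℍ, satisfies (P_{Γ,χ}f_{k,m})(γ.z)·η_γ(z)^{−2m} = χ(γ)·(P_{Γ,χ}f_{k,m})(z) for all γ ∈ Γ and z ∈ ℍ, and sup_{z∈ℍ} |(P_{Γ,χ}f_{k,m})(z)|·(Im z)^{m/2} < ∞. -/

import Mathlib

open Complex MeasureTheory Filter Topology
open scoped Real

set_option autoImplicit false

noncomputable section

/-- `SL₂(ℤ)`. -/
abbrev SL2Z := Matrix.SpecialLinearGroup (Fin 2) ℤ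

/-- The upper half-plane, as a subset of `ℂ`. -/
def UH : Set ℂ := {z : ℂ | 0 < z.im}

/-- The `(i,j)` entry of `γ ∈ SL₂(ℤ)`, as a complex number. -/
def entry (γ : SL2Z) (i j : Fin 2) : ℂ :=
  ((γ : Matrix (Fin 2) (Fin 2) ℤ) i j : ℂ)

/-- The Möbius action of `SL₂(ℤ)` on the upper half-plane (as a map on `ℂ`). -/
def act (γ : SL2Z) (z : ℂ) : ℂ :=
  (entry γ 0 0 * z + entry γ 0 1) / (entry γ 1 0 * z + entry γ 1 1)

/-- The hyperbolic measure `dv(x+iy) = dx·dy/y²` on the upper half-plane. -/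
def hypMeasure : Measure ℂ :=
  ((volume : Measure ℂ).withDensity fun z => ENNReal.ofReal (1 / z.im ^ 2)).restrict UH

/-- A multiplier system on `Γ`: holomorphic square roots `η_γ` of `z ↦ c_γ z + d_γ`
satisfying the cocycle condition. -/
structure IsMultiplierSystem (Γ : Subgroup SL2Z) (η : Γ → ℂ → ℂ) : Prop where
  holo : ∀ γ : Γ, DifferentiableOn ℂ (η γ) UH
  sq : ∀ γ : Γ, ∀ z ∈ UH, η γ z ^ 2 = entry (γ : SL2Z) 1 0 * z + entry (γ : SL2Z) 1 1
  cocycle : ∀ γ₁ γ₂ : Γ, ∀ z ∈ UH,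
    η (γ₁ * γ₂) z = η γ₁ (act (γ₂ : SL2Z) z) * η γ₂ z

/-- `χ` has finite order. -/
def HasFiniteOrderChar (Γ : Subgroup SL2Z) (χ : Γ →* ℂˣ) : Prop :=
  ∃ n : ℕ, 0 < n ∧ ∀ γ : Γ, χ γ ^ n = 1

/-- `f` is a cusp form of weight `m = 5/2 + j` for `(Γ, η, χ)`; here
`η γ z ^ (-(5 + 2j))` is the integer power `η_γ(z)^{-2m}`, and the boundedness of
`‖f‖·(Im z)^{m/2}` on the upper half-plane expresses the vanishing at all cusps. -/
def IsCuspForm (Γ : Subgroup SL2Z) (η : Γ → ℂ → ℂ) (χ : Γ →* ℂˣ) (m : ℝ) (j : ℕ)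
    (f : ℂ → ℂ) : Prop :=
  DifferentiableOn ℂ f UH ∧
  (∀ γ : Γ, ∀ z ∈ UH,
    f (act (γ : SL2Z) z) * η γ z ^ (-(5 + 2 * (j : ℤ))) = (χ γ : ℂ) * f z) ∧
  ∃ C : ℝ, ∀ z ∈ UH, ‖f z‖ * z.im ^ (m / 2) ≤ C

/-- A measurable fundamental domain for the action of `Γ` on the upper half-plane,
with respect to the hyperbolic measure. -/
def IsFundDom (Γ : Subgroup SL2Z) (F : Set ℂ) : Prop :=
  MeasurableSet F ∧ F ⊆ UH ∧
  hypMeasure (UH \ ⋃ γ : Γ, act (γ : SL2Z) '' F) = 0 ∧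
  ∀ γ : Γ, γ ≠ 1 → hypMeasure (F ∩ act (γ : SL2Z) '' F) = 0

/-- `f_{k,m}(z) = (2i)^m (z-i)^k / (z+i)^{m+k}` (principal powers). -/
def fkm (m : ℝ) (k : ℕ) (z : ℂ) : ℂ :=
  (2 * I) ^ (m : ℂ) * (z - I) ^ k / (z + I) ^ ((m : ℂ) + (k : ℂ))

/-- The term indexed by `γ` of the Poincaré series `P_{Γ,χ} f_{k,m}`;
`η γ z ^ (-(5 + 2j))` is the integer power `η_γ(z)^{-2m}` for `m = 5/2 + j`. -/
def PTerm (Γ : Subgroup SL2Z) (η : Γ → ℂ → ℂ) (χ : Γ →* ℂˣ) (m : ℝ) (j : ℕ) (k : ℕ)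
    (γ : Γ) (z : ℂ) : ℂ :=
  (starRingEnd ℂ) (χ γ : ℂ) * fkm m k (act (γ : SL2Z) z) * η γ z ^ (-(5 + 2 * (j : ℤ)))

/-- The Poincaré series `P_{Γ,χ} f_{k,m}`. -/
def PoincareP (Γ : Subgroup SL2Z) (η : Γ → ℂ → ℂ) (χ : Γ →* ℂˣ) (m : ℝ) (j : ℕ) (k : ℕ)
    (z : ℂ) : ℂ :=
  ∑' γ : Γ, PTerm Γ η χ m j k γ z


/-!
Write `L_γ(z) = (a z + b) + i (c z + d) = (γ z + i)(c z + d)`. Since `|w - i| ≤ |w + i|` on the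
upper half-plane and `|η_γ(z)|² = |c z + d|`, the `γ`-term of the Poincaré series is bounded by
`2^m |L_γ(z)|^{-m}`, so everything reduces to the majorant `M(z) = ∑_{γ ∈ SL₂(ℤ)} |L_γ(z)|^{-m}`.
The cosets `γ T^ℤ` are indexed injectively by the first column `(a, c)`, and
`L_{γ T^s}(z) = (a + c i)(w + s)` with `Im w ≥ Im z`; summing first over `s` and then over the
first columns gives `M(z) ≤ (y^{-m} + Z y^{-m/2}) ∑_{x ∈ ℤ² ∖ 0} ‖x‖^{-m}` with
`Z = ∑_{n ≠ 0} |n|^{-m/2}`, finite as `m > 2`. As `|L_γ(z₀)| ≤ 2 |L_γ(z)|` for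
`|z - z₀| < Im z₀ / 2`, this majorant is locally uniform, which gives holomorphy; reindexing
`γ ↦ γ δ` gives the transformation law. Finally `y^{m/2} M(z)` is `SL₂(ℤ)`-invariant, because
`L_{γ δ}(z) = L_γ(δ z)(c_δ z + d_δ)` and `Im(δ z) = y / |c_δ z + d_δ|²`, and it is bounded on
`y ≥ √3/2`, a region meeting every orbit.
-/

open scoped ENNReal
open ModularGroup (T)

namespace PoincareSeries

section Moebius

def denom (γ : SL2Z) (z : ℂ) : ℂ := entry γ 1 0 * z + entry γ 1 1

def colFst (γ : SL2Z) : ℂ := entry γ 0 0 + entry γ 1 0 * I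

def colSnd (γ : SL2Z) : ℂ := entry γ 0 1 + entry γ 1 1 * I

def lin (γ : SL2Z) (z : ℂ) : ℂ := colFst γ * z + colSnd γ

lemma det_eq_one (γ : SL2Z) : γ 0 0 * γ 1 1 - γ 0 1 * γ 1 0 = 1 := by
  rw [← Matrix.det_fin_two]
  exact γ.det_coe

lemma det_intCast_real (γ : SL2Z) :
    (γ 0 0 : ℝ) * γ 1 1 - (γ 0 1 : ℝ) * γ 1 0 = 1 := by
  exact_mod_cast det_eq_one γ

lemma entry_mul (γ δ : SL2Z) (i j : Fin 2) :
    entry (γ * δ) i j = entry γ i 0 * entry δ 0 j + entry γ i 1 * entry δ 1 j := by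
  simp only [entry, Matrix.SpecialLinearGroup.coe_mul, Matrix.mul_apply, Fin.sum_univ_two]
  push_cast
  ring

lemma denom_ne_zero (γ : SL2Z) {z : ℂ} (hz : 0 < z.im) : denom γ z ≠ 0 := by
  intro h
  have him := congrArg im h
  have hre := congrArg re h
  simp only [denom, entry, add_im, add_re, mul_im, mul_re, intCast_re, intCast_im, zero_mul,
    add_zero, sub_zero, zero_re, zero_im] at him hre
  have hc : (γ 1 0 : ℝ) = 0 := (mul_eq_zero.1 him).resolve_right hz.ne'
  have hd : (γ 1 1 : ℝ) = 0 := by simpa [hc] using hre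
  simpa [hc, hd] using det_intCast_real γ

lemma im_act (γ : SL2Z) (z : ℂ) : (act γ z).im = z.im / normSq (denom γ z) := by
  rw [act, div_im, ← sub_div]
  congr 1
  simp only [entry, add_im, add_re, mul_im, mul_re, intCast_re, intCast_im]
  linear_combination z.im * det_intCast_real γ

lemma im_act_pos (γ : SL2Z) {z : ℂ} (hz : 0 < z.im) : 0 < (act γ z).im := by
  rw [im_act]
  exact div_pos hz (normSq_pos.2 (denom_ne_zero γ hz))

lemma denom_mul (γ δ : SL2Z) {z : ℂ} (hz : 0 < z.im) :
    denom (γ * δ) z = denom γ (act δ z) * denom δ z := by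
  have hδ := denom_ne_zero δ hz
  unfold denom at hδ ⊢
  rw [act, add_mul, mul_assoc, div_mul_cancel₀ _ hδ, entry_mul, entry_mul]
  ring

lemma act_mul (γ δ : SL2Z) {z : ℂ} (hz : 0 < z.im) : act (γ * δ) z = act γ (act δ z) := by
  have hδ := denom_ne_zero δ hz
  have hnum : (entry γ 0 0 * act δ z + entry γ 0 1) * denom δ z
      = entry (γ * δ) 0 0 * z + entry (γ * δ) 0 1 := by
    unfold denom at hδ ⊢
    rw [add_mul, mul_assoc, act, div_mul_cancel₀ _ hδ, entry_mul, entry_mul]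
    ring
  rw [act, ← hnum, ← denom, denom_mul γ δ hz, mul_div_mul_right _ _ hδ]
  rfl

lemma lin_eq_mul_denom (γ : SL2Z) {z : ℂ} (hz : 0 < z.im) :
    lin γ z = (act γ z + I) * denom γ z := by
  have hγ := denom_ne_zero γ hz
  unfold denom at hγ ⊢
  rw [add_mul, act, div_mul_cancel₀ _ hγ, lin, colFst, colSnd]
  ring

lemma lin_mul (γ δ : SL2Z) {z : ℂ} (hz : 0 < z.im) :
    lin (γ * δ) z = lin γ (act δ z) * denom δ z := by
  rw [lin_eq_mul_denom _ hz, lin_eq_mul_denom _ (im_act_pos δ hz), denom_mul γ δ hz, act_mul γ δ hz]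
  ring

end Moebius

section Columns

def firstCol (γ : SL2Z) : Fin 2 → ℤ := ![γ 0 0, γ 1 0]

lemma firstCol_ne_zero (γ : SL2Z) : firstCol γ ≠ 0 := by
  intro h
  have ha : (γ 0 0 : ℝ) = 0 := by exact_mod_cast congrFun h 0
  have hc : (γ 1 0 : ℝ) = 0 := by exact_mod_cast congrFun h 1
  simpa [ha, hc] using det_intCast_real γ

lemma norm_firstCol_le (γ : SL2Z) : ‖firstCol γ‖ ≤ ‖colFst γ‖ := by
  refine pi_norm_le_iff_of_nonneg (norm_nonneg _) |>.2 fun i => ?_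
  fin_cases i
  · simpa [firstCol, colFst, entry, Int.norm_eq_abs] using abs_re_le_norm (colFst γ)
  · simpa [firstCol, colFst, entry, Int.norm_eq_abs] using abs_im_le_norm (colFst γ)

lemma colFst_ne_zero (γ : SL2Z) : colFst γ ≠ 0 :=
  norm_pos_iff.1 <| (norm_pos_iff.2 (firstCol_ne_zero γ)).trans_le (norm_firstCol_le γ)

lemma im_colSnd_div_colFst (γ : SL2Z) : (colSnd γ / colFst γ).im = (normSq (colFst γ))⁻¹ := by
  rw [div_im, ← sub_div, inv_eq_one_div]
  congr 1
  simp only [colFst, colSnd, entry, add_im, add_re, mul_im, mul_re, intCast_re, intCast_im, I_re,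
    I_im]
  linear_combination det_intCast_real γ

lemma im_le_im_add_colSnd_div_colFst (γ : SL2Z) (z : ℂ) :
    z.im ≤ (z + colSnd γ / colFst γ).im := by
  rw [add_im, im_colSnd_div_colFst]
  have := normSq_pos.2 (colFst_ne_zero γ)
  linarith [inv_pos.2 this]

lemma lin_eq_colFst_mul (γ : SL2Z) (z : ℂ) :
    lin γ z = colFst γ * (z + colSnd γ / colFst γ) := by
  rw [lin, mul_add, mul_div_cancel₀ _ (colFst_ne_zero γ)]

lemma norm_colFst_mul_im_le (γ : SL2Z) (z : ℂ) : ‖colFst γ‖ * z.im ≤ ‖lin γ z‖ := by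
  rw [lin_eq_colFst_mul, norm_mul]
  gcongr
  exact (im_le_im_add_colSnd_div_colFst γ z).trans (im_le_norm _)

lemma norm_lin_pos (γ : SL2Z) {z : ℂ} (hz : 0 < z.im) : 0 < ‖lin γ z‖ :=
  (mul_pos (norm_pos_iff.2 (colFst_ne_zero γ)) hz).trans_le (norm_colFst_mul_im_le γ z)

lemma lin_mul_T_zpow (γ : SL2Z) (s : ℤ) (z : ℂ) :
    lin (γ * T ^ s) z = colFst γ * (z + colSnd γ / colFst γ + s) := by
  have h : lin (γ * T ^ s) z = lin γ z + s * colFst γ := by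
    simp only [lin, colFst, colSnd, entry_mul]
    simp only [entry, Fin.isValue, ModularGroup.coe_T_zpow, Matrix.of_apply, Matrix.cons_val',
      Matrix.cons_val_zero, Matrix.cons_val_fin_one, Matrix.cons_val_one, Int.cast_one,
      Int.cast_zero, mul_one, mul_zero, add_zero]
    ring
  rw [h, lin_eq_colFst_mul]
  ring

lemma mem_zpowers_T_of_firstCol_eq {γ δ : SL2Z} (h : firstCol γ = firstCol δ) :
    γ⁻¹ * δ ∈ Subgroup.zpowers T := by
  have ha : γ 0 0 = δ 0 0 := congrFun h 0
  have hc : γ 1 0 = δ 1 0 := congrFun h 1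
  set ε := γ⁻¹ * δ
  have hε : ∀ i j, ε i j = (γ : Matrix (Fin 2) (Fin 2) ℤ).adjugate i 0 * δ 0 j
      + (γ : Matrix (Fin 2) (Fin 2) ℤ).adjugate i 1 * δ 1 j := fun i j => by
    simp [ε, Matrix.SpecialLinearGroup.coe_inv, Matrix.mul_apply, Fin.sum_univ_two]
  have h00 : ε 0 0 = 1 := by
    simp only [Fin.isValue, hε, Matrix.adjugate_fin_two, Matrix.of_apply, Matrix.cons_val',
      Matrix.cons_val_zero, Matrix.cons_val_fin_one, Matrix.cons_val_one, ← ha, ← hc, neg_mul]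
    linear_combination det_eq_one γ
  have h10 : ε 1 0 = 0 := by
    simp only [Fin.isValue, hε, Matrix.adjugate_fin_two, Matrix.of_apply, Matrix.cons_val',
      Matrix.cons_val_zero, Matrix.cons_val_fin_one, Matrix.cons_val_one, ← ha, ← hc, neg_mul]
    ring
  have h11 : ε 1 1 = 1 := by
    simpa [h00, h10] using det_eq_one ε
  refine Subgroup.mem_zpowers_iff.2 ⟨ε 0 1, Subtype.ext ?_⟩
  ext i j
  fin_cases i <;> fin_cases j <;> simp [ModularGroup.coe_T_zpow, h00, h10, h11]

lemma surjective_out_mul_T_zpow :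
    Function.Surjective fun p : (SL2Z ⧸ Subgroup.zpowers T) × ℤ => Quotient.out p.1 * T ^ p.2 := by
  intro γ
  have h : (Quotient.out (γ : SL2Z ⧸ Subgroup.zpowers T))⁻¹ * γ ∈ Subgroup.zpowers T :=
    QuotientGroup.eq.1 (QuotientGroup.out_eq' _)
  obtain ⟨s, hs⟩ := Subgroup.mem_zpowers_iff.1 h
  exact ⟨(γ, s), by simp [hs]⟩

lemma injective_firstCol_out :
    Function.Injective fun q : SL2Z ⧸ Subgroup.zpowers T => firstCol (Quotient.out q) := by
  intro q₁ q₂ h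
  rw [← QuotientGroup.out_eq' q₁, ← QuotientGroup.out_eq' q₂]
  exact QuotientGroup.eq.2 (mem_zpowers_T_of_firstCol_eq h)

end Columns

section Majorant

variable {m : ℝ}

lemma mul_abs_intCast_le_norm_add_intCast_sq {w : ℂ} (hre : |w.re| ≤ 1 / 2) (him : 0 ≤ w.im)
    (n : ℤ) : w.im * |(n : ℝ)| ≤ ‖w + n‖ ^ 2 := by
  rcases eq_or_ne n 0 with rfl | hn
  · simp
  have h1 : (1 : ℝ) ≤ |(n : ℝ)| := by exact_mod_cast Int.one_le_abs hn
  have h2 : |(n : ℝ)| ≤ |w.re + n| + |w.re| := by simpa using abs_sub (w.re + n) w.re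
  have h3 : w.im * |(n : ℝ)| ≤ w.im * (2 * |w.re + n|) :=
    mul_le_mul_of_nonneg_left (by linarith) him
  rw [Complex.sq_norm, normSq_apply]
  simp only [add_re, intCast_re, add_im, intCast_im, add_zero]
  nlinarith [sq_nonneg (|w.re + n| - w.im), sq_abs (w.re + n)]

lemma norm_add_intCast_rpow_le (hm : 0 ≤ m) {w : ℂ} {y : ℝ} (hy : 0 < y) (hw : y ≤ w.im)
    (hre : |w.re| ≤ 1 / 2) {n : ℤ} (hn : n ≠ 0) :
    ‖w + n‖ ^ (-m) ≤ y ^ (-(m / 2)) * |(n : ℝ)| ^ (-(m / 2)) := by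
  have hn' : 0 < |(n : ℝ)| := abs_pos.2 (Int.cast_ne_zero.2 hn)
  calc ‖w + n‖ ^ (-m) = (‖w + n‖ ^ 2) ^ (-(m / 2)) := by
        rw [← Real.rpow_natCast, ← Real.rpow_mul (norm_nonneg _)]
        ring_nf
    _ ≤ (y * |(n : ℝ)|) ^ (-(m / 2)) := by
        refine Real.rpow_le_rpow_of_nonpos (by positivity) ?_ (by linarith)
        exact (mul_le_mul_of_nonneg_right hw hn'.le).trans
          (mul_abs_intCast_le_norm_add_intCast_sq hre (hy.le.trans hw) n)
    _ = y ^ (-(m / 2)) * |(n : ℝ)| ^ (-(m / 2)) := Real.mul_rpow hy.le hn'.le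

/- The junk value `0 ^ x = 0` for `x ≠ 0` makes the `n = 0` and `x = 0` terms vanish, so these are
the sums over nonzero `n` and `x`. -/
def sumIntRpow (m : ℝ) : ℝ := ∑' n : ℤ, |(n : ℝ)| ^ (-(m / 2))

def sumLatticeRpow (m : ℝ) : ℝ := ∑' x : Fin 2 → ℤ, ‖x‖ ^ (-m)

def intShiftBound (m y : ℝ) : ℝ := y ^ (-m) + y ^ (-(m / 2)) * sumIntRpow m

lemma sumIntRpow_nonneg (m : ℝ) : 0 ≤ sumIntRpow m :=
  tsum_nonneg fun _ => by positivity

lemma sumLatticeRpow_nonneg (m : ℝ) : 0 ≤ sumLatticeRpow m :=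
  tsum_nonneg fun _ => by positivity

lemma intShiftBound_nonneg (m : ℝ) {y : ℝ} (hy : 0 ≤ y) : 0 ≤ intShiftBound m y :=
  add_nonneg (by positivity) (mul_nonneg (by positivity) (sumIntRpow_nonneg m))

lemma tsum_ofReal_norm_add_intCast_rpow_le (hm : 2 < m) {w : ℂ} {y : ℝ} (hy : 0 < y)
    (hw : y ≤ w.im) :
    ∑' n : ℤ, ENNReal.ofReal (‖w + n‖ ^ (-m)) ≤ ENNReal.ofReal (intShiftBound m y) := by
  set w' := w - round w.re
  have hre : |w'.re| ≤ 1 / 2 := by simpa [w'] using abs_sub_round w.re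
  have hw' : y ≤ w'.im := by simpa [w'] using hw
  have hterm (n : ℤ) : ENNReal.ofReal (‖w' + n‖ ^ (-m))
      ≤ (if n = 0 then ENNReal.ofReal (y ^ (-m)) else 0)
        + ENNReal.ofReal (y ^ (-(m / 2))) * ENNReal.ofReal (|(n : ℝ)| ^ (-(m / 2))) := by
    rcases eq_or_ne n 0 with rfl | hn
    · simp only [Int.cast_zero, add_zero, if_pos]
      exact le_add_right (ENNReal.ofReal_le_ofReal
        (Real.rpow_le_rpow_of_nonpos hy (hw'.trans (im_le_norm w')) (by linarith)))
    · rw [if_neg hn, zero_add, ← ENNReal.ofReal_mul (by positivity)]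
      exact ENNReal.ofReal_le_ofReal (norm_add_intCast_rpow_le (by linarith) hy hw' hre hn)
  calc ∑' n : ℤ, ENNReal.ofReal (‖w + n‖ ^ (-m))
      = ∑' n : ℤ, ENNReal.ofReal (‖w' + n‖ ^ (-m)) := by
        rw [← (Equiv.addRight (round w.re)).tsum_eq fun n : ℤ => ENNReal.ofReal (‖w' + n‖ ^ (-m))]
        simp [w']
    _ ≤ _ := ENNReal.tsum_le_tsum hterm
    _ = ENNReal.ofReal (intShiftBound m y) := by
        rw [ENNReal.tsum_add, tsum_ite_eq, ENNReal.tsum_mul_left, intShiftBound,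
          ENNReal.ofReal_add (by positivity) (mul_nonneg (by positivity) (sumIntRpow_nonneg m)),
          ENNReal.ofReal_mul (by positivity), sumIntRpow, ENNReal.ofReal_tsum_of_nonneg
            (fun _ => by positivity) (Real.summable_abs_int_rpow (by linarith))]

lemma tsum_ofReal_norm_lin_mul_T_zpow_rpow_le (hm : 2 < m) (γ : SL2Z) {z : ℂ} (hz : 0 < z.im) :
    ∑' s : ℤ, ENNReal.ofReal (‖lin (γ * T ^ s) z‖ ^ (-m))
      ≤ ENNReal.ofReal (‖colFst γ‖ ^ (-m)) * ENNReal.ofReal (intShiftBound m z.im) := by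
  simp_rw [lin_mul_T_zpow, norm_mul, Real.mul_rpow (norm_nonneg _) (norm_nonneg _),
    ENNReal.ofReal_mul (Real.rpow_nonneg (norm_nonneg _) _)]
  rw [ENNReal.tsum_mul_left]
  gcongr
  exact tsum_ofReal_norm_add_intCast_rpow_le hm hz (im_le_im_add_colSnd_div_colFst γ z)

lemma tsum_ofReal_norm_colFst_out_rpow_le (hm : 2 < m) :
    ∑' q : SL2Z ⧸ Subgroup.zpowers T, ENNReal.ofReal (‖colFst (Quotient.out q)‖ ^ (-m))
      ≤ ENNReal.ofReal (sumLatticeRpow m) := by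
  calc ∑' q : SL2Z ⧸ Subgroup.zpowers T, ENNReal.ofReal (‖colFst (Quotient.out q)‖ ^ (-m))
      ≤ ∑' q : SL2Z ⧸ Subgroup.zpowers T, ENNReal.ofReal (‖firstCol (Quotient.out q)‖ ^ (-m)) :=
        ENNReal.tsum_le_tsum fun q => ENNReal.ofReal_le_ofReal <| Real.rpow_le_rpow_of_nonpos
          (norm_pos_iff.2 (firstCol_ne_zero _)) (norm_firstCol_le _) (by linarith)
    _ ≤ ∑' x : Fin 2 → ℤ, ENNReal.ofReal (‖x‖ ^ (-m)) :=
        ENNReal.tsum_comp_le_tsum_of_injective injective_firstCol_out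
          fun x => ENNReal.ofReal (‖x‖ ^ (-m))
    _ = ENNReal.ofReal (sumLatticeRpow m) :=
        (ENNReal.ofReal_tsum_of_nonneg (fun _ => by positivity)
          (EisensteinSeries.summable_one_div_norm_rpow hm)).symm

lemma tsum_ofReal_norm_lin_rpow_le (hm : 2 < m) {z : ℂ} (hz : 0 < z.im) :
    ∑' γ : SL2Z, ENNReal.ofReal (‖lin γ z‖ ^ (-m))
      ≤ ENNReal.ofReal (sumLatticeRpow m * intShiftBound m z.im) := by
  calc ∑' γ : SL2Z, ENNReal.ofReal (‖lin γ z‖ ^ (-m))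
      ≤ ∑' p : (SL2Z ⧸ Subgroup.zpowers T) × ℤ,
          ENNReal.ofReal (‖lin (Quotient.out p.1 * T ^ p.2) z‖ ^ (-m)) :=
        ENNReal.tsum_le_tsum_comp_of_surjective surjective_out_mul_T_zpow
          fun γ => ENNReal.ofReal (‖lin γ z‖ ^ (-m))
    _ = ∑' (q : SL2Z ⧸ Subgroup.zpowers T) (s : ℤ),
          ENNReal.ofReal (‖lin (Quotient.out q * T ^ s) z‖ ^ (-m)) := ENNReal.tsum_prod'
    _ ≤ ∑' q : SL2Z ⧸ Subgroup.zpowers T, ENNReal.ofReal (‖colFst (Quotient.out q)‖ ^ (-m))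
          * ENNReal.ofReal (intShiftBound m z.im) :=
        ENNReal.tsum_le_tsum fun q => tsum_ofReal_norm_lin_mul_T_zpow_rpow_le hm _ hz
    _ = (∑' q : SL2Z ⧸ Subgroup.zpowers T, ENNReal.ofReal (‖colFst (Quotient.out q)‖ ^ (-m)))
          * ENNReal.ofReal (intShiftBound m z.im) := ENNReal.tsum_mul_right
    _ ≤ ENNReal.ofReal (sumLatticeRpow m) * ENNReal.ofReal (intShiftBound m z.im) := by
        gcongr
        exact tsum_ofReal_norm_colFst_out_rpow_le hm
    _ = ENNReal.ofReal (sumLatticeRpow m * intShiftBound m z.im) :=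
        (ENNReal.ofReal_mul (sumLatticeRpow_nonneg m)).symm

def majorant (m : ℝ) (z : ℂ) : ℝ := ∑' γ : SL2Z, ‖lin γ z‖ ^ (-m)

lemma summable_norm_lin_rpow (hm : 2 < m) {z : ℂ} (hz : 0 < z.im) :
    Summable fun γ : SL2Z => ‖lin γ z‖ ^ (-m) := by
  have h := ENNReal.summable_toReal
    ((tsum_ofReal_norm_lin_rpow_le hm hz).trans_lt ENNReal.ofReal_lt_top).ne
  simpa [ENNReal.toReal_ofReal (Real.rpow_nonneg (norm_nonneg _) _)] using h

lemma majorant_le (hm : 2 < m) {z : ℂ} (hz : 0 < z.im) :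
    majorant m z ≤ sumLatticeRpow m * intShiftBound m z.im := by
  rw [← ENNReal.ofReal_le_ofReal_iff
      (mul_nonneg (sumLatticeRpow_nonneg m) (intShiftBound_nonneg m hz.le)),
    majorant, ENNReal.ofReal_tsum_of_nonneg (fun _ => by positivity)
      (summable_norm_lin_rpow hm hz)]
  exact tsum_ofReal_norm_lin_rpow_le hm hz

lemma im_act_rpow_mul_norm_lin_rpow (γ δ : SL2Z) {z : ℂ} (hz : 0 < z.im) :
    (act δ z).im ^ (m / 2) * ‖lin γ (act δ z)‖ ^ (-m)
      = z.im ^ (m / 2) * ‖lin (γ * δ) z‖ ^ (-m) := by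
  have hD := norm_pos_iff.2 (denom_ne_zero δ hz)
  rw [lin_mul γ δ hz, norm_mul, Real.mul_rpow (norm_nonneg _) hD.le, im_act, normSq_eq_norm_sq,
    Real.div_rpow hz.le (sq_nonneg _), ← Real.rpow_natCast, ← Real.rpow_mul hD.le,
    Real.rpow_neg hD.le, show ((2 : ℕ) : ℝ) * (m / 2) = m by push_cast; ring]
  ring

lemma im_act_rpow_mul_majorant (δ : SL2Z) {z : ℂ} (hz : 0 < z.im) :
    (act δ z).im ^ (m / 2) * majorant m (act δ z) = z.im ^ (m / 2) * majorant m z := by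
  simp only [majorant, ← tsum_mul_left, im_act_rpow_mul_norm_lin_rpow _ δ hz]
  exact (Equiv.mulRight δ).tsum_eq fun γ => z.im ^ (m / 2) * ‖lin γ z‖ ^ (-m)

lemma act_coe_eq_coe_smul (g : SL2Z) (τ : UpperHalfPlane) : act g τ = ↑(g • τ) := by
  rw [UpperHalfPlane.coe_specialLinearGroup_apply]
  simp [act, entry]

lemma exists_sqrt_three_div_two_le_im_act {z : ℂ} (hz : 0 < z.im) :
    ∃ g : SL2Z, √3 / 2 ≤ (act g z).im := by
  obtain ⟨g, hg⟩ := ModularGroup.exists_smul_mem_fd ⟨z, hz⟩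
  refine ⟨g, ?_⟩
  rw [show z = ((⟨z, hz⟩ : UpperHalfPlane) : ℂ) from rfl, act_coe_eq_coe_smul,
    UpperHalfPlane.coe_im]
  have h3 := ModularGroup.three_le_four_mul_im_sq_of_mem_fd hg
  have hpos := (g • (⟨z, hz⟩ : UpperHalfPlane)).im_pos
  nlinarith [Real.sq_sqrt (show (0 : ℝ) ≤ 3 by norm_num), Real.sqrt_nonneg 3]

lemma im_rpow_mul_majorant_le (hm : 2 < m) {c : ℝ} (hc : 0 < c) {z : ℂ} (hz : c ≤ z.im) :
    z.im ^ (m / 2) * majorant m z ≤ sumLatticeRpow m * (c ^ (-(m / 2)) + sumIntRpow m) := by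
  have hy : 0 < z.im := hc.trans_le hz
  have e₁ : z.im ^ (m / 2) * z.im ^ (-m) = z.im ^ (-(m / 2)) := by
    rw [← Real.rpow_add hy]
    ring_nf
  have e₂ : z.im ^ (m / 2) * z.im ^ (-(m / 2)) = 1 := by
    rw [← Real.rpow_add hy, add_neg_cancel, Real.rpow_zero]
  calc z.im ^ (m / 2) * majorant m z
      ≤ z.im ^ (m / 2) * (sumLatticeRpow m * intShiftBound m z.im) := by
        gcongr
        exact majorant_le hm hy
    _ = sumLatticeRpow m * (z.im ^ (-(m / 2)) + sumIntRpow m) := by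
        rw [intShiftBound]
        linear_combination sumLatticeRpow m * e₁ + sumLatticeRpow m * sumIntRpow m * e₂
    _ ≤ sumLatticeRpow m * (c ^ (-(m / 2)) + sumIntRpow m) := by
        gcongr ?_ * (?_ + _)
        · exact sumLatticeRpow_nonneg m
        · exact Real.rpow_le_rpow_of_nonpos hc hz (by linarith)

lemma exists_im_rpow_mul_majorant_le (hm : 2 < m) :
    ∃ C, ∀ z ∈ UH, z.im ^ (m / 2) * majorant m z ≤ C := by
  refine ⟨sumLatticeRpow m * ((√3 / 2) ^ (-(m / 2)) + sumIntRpow m), fun z hz => ?_⟩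
  obtain ⟨g, hg⟩ := exists_sqrt_three_div_two_le_im_act hz
  rw [← im_act_rpow_mul_majorant g hz]
  exact im_rpow_mul_majorant_le hm (by positivity) hg

end Majorant

lemma norm_zpow_eq_sq_rpow {𝕜 : Type*} [NormedDivisionRing 𝕜] (x : 𝕜) (n : ℤ) :
    ‖x ^ n‖ = (‖x‖ ^ 2) ^ ((n : ℝ) / 2) := by
  rw [norm_zpow, ← Real.rpow_natCast, ← Real.rpow_mul (norm_nonneg _), ← Real.rpow_intCast]
  congr 1
  push_cast
  ring

lemma norm_fkm_le (m : ℝ) (k : ℕ) {w : ℂ} (hw : 0 < w.im) :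
    ‖fkm m k w‖ ≤ 2 ^ m * ‖w + I‖ ^ (-m) := by
  have hpos : 0 < ‖w + I‖ := by
    have him : 0 < (w + I).im := by simp only [add_im, I_im]; linarith
    exact him.trans_le (im_le_norm _)
  have hnum : ‖w - I‖ ≤ ‖w + I‖ := by
    rw [← sq_le_sq₀ (norm_nonneg _) (norm_nonneg _), Complex.sq_norm, Complex.sq_norm,
      normSq_apply, normSq_apply]
    simp only [sub_re, add_re, I_re, sub_im, add_im, I_im]
    nlinarith
  have hden : ‖(w + I) ^ ((m : ℂ) + (k : ℂ))‖ = ‖w + I‖ ^ m * ‖w + I‖ ^ k := by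
    rw [show (m : ℂ) + (k : ℂ) = ((m + k : ℝ) : ℂ) by push_cast; ring, norm_cpow_real,
      Real.rpow_add hpos, Real.rpow_natCast]
  rw [fkm, norm_div, norm_mul, norm_pow, norm_cpow_real, hden, Real.rpow_neg hpos.le,
    show ‖(2 : ℂ) * I‖ = 2 by simp, div_le_iff₀ (by positivity)]
  calc 2 ^ m * ‖w - I‖ ^ k ≤ 2 ^ m * ‖w + I‖ ^ k := by gcongr
    _ = 2 ^ m * (‖w + I‖ ^ m)⁻¹ * (‖w + I‖ ^ m * ‖w + I‖ ^ k) := by field_simp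

lemma differentiableAt_fkm (m : ℝ) (k : ℕ) {w : ℂ} (hw : 0 < w.im) :
    DifferentiableAt ℂ (fkm m k) w := by
  have hslit : w + I ∈ slitPlane := Or.inr (by simp only [add_im, I_im]; linarith)
  exact (((differentiableAt_id.sub_const I).pow k).const_mul _).div
    ((differentiableAt_id.add_const I).cpow (differentiableAt_const _) hslit)
    (cpow_ne_zero_iff.2 (Or.inl (slitPlane_ne_zero hslit)))

lemma im_half_lt_im_of_mem_ball {z₀ z : ℂ} (hz : z ∈ Metric.ball z₀ (z₀.im / 2)) :
    z₀.im / 2 < z.im := by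
  rw [Metric.mem_ball, dist_eq] at hz
  have h := (abs_le.1 (abs_im_le_norm (z - z₀))).1
  rw [sub_im] at h
  linarith

lemma norm_lin_rpow_le_of_mem_ball {m : ℝ} (hm : 0 ≤ m) (γ : SL2Z) {z₀ z : ℂ}
    (hz₀ : 0 < z₀.im) (hz : z ∈ Metric.ball z₀ (z₀.im / 2)) :
    ‖lin γ z‖ ^ (-m) ≤ 2 ^ m * ‖lin γ z₀‖ ^ (-m) := by
  have hdist : ‖z - z₀‖ ≤ z.im := by
    have := im_half_lt_im_of_mem_ball hz
    rw [Metric.mem_ball, dist_eq] at hz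
    linarith
  have hle : ‖lin γ z₀‖ ≤ 2 * ‖lin γ z‖ := by
    calc ‖lin γ z₀‖ = ‖lin γ z + colFst γ * -(z - z₀)‖ := by
          congr 1
          simp only [lin]
          ring
      _ ≤ ‖lin γ z‖ + ‖colFst γ‖ * ‖z - z₀‖ := by
          rw [← norm_neg (z - z₀), ← norm_mul]
          exact norm_add_le _ _
      _ ≤ ‖lin γ z‖ + ‖colFst γ‖ * z.im := by gcongr
      _ ≤ 2 * ‖lin γ z‖ := by linarith [norm_colFst_mul_im_le γ z]
  have h₀ := norm_lin_pos γ hz₀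
  calc ‖lin γ z‖ ^ (-m) ≤ (‖lin γ z₀‖ / 2) ^ (-m) :=
        Real.rpow_le_rpow_of_nonpos (by positivity) (by linarith) (by linarith)
    _ = 2 ^ m * ‖lin γ z₀‖ ^ (-m) := by
        rw [Real.div_rpow h₀.le zero_le_two, Real.rpow_neg zero_le_two, div_inv_eq_mul, mul_comm]

lemma isOpen_UH : IsOpen UH := isOpen_lt continuous_const continuous_im

section Poincare

variable {Γ : Subgroup SL2Z} {η : Γ → ℂ → ℂ} {χ : Γ →* ℂˣ} {m : ℝ} {j k : ℕ}

lemma two_lt_of_eq_five_div_two_add (hm : m = 5 / 2 + j) : 2 < m := by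
  rw [hm]
  linarith [j.cast_nonneg (α := ℝ)]

lemma eta_ne_zero (hη : IsMultiplierSystem Γ η) (γ : Γ) {z : ℂ} (hz : z ∈ UH) : η γ z ≠ 0 := by
  intro h
  apply denom_ne_zero (γ : SL2Z) hz
  rw [denom, ← hη.sq γ z hz, h, zero_pow two_ne_zero]

lemma norm_eta_zpow (hη : IsMultiplierSystem Γ η) (hm : m = 5 / 2 + j) (γ : Γ) {z : ℂ}
    (hz : z ∈ UH) : ‖η γ z ^ (-(5 + 2 * (j : ℤ)))‖ = ‖denom γ z‖ ^ (-m) := by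
  rw [norm_zpow_eq_sq_rpow, ← norm_pow, hη.sq γ z hz]
  congr 1
  push_cast [hm]
  ring

lemma norm_char_eq_one (hχ : HasFiniteOrderChar Γ χ) (γ : Γ) : ‖(χ γ : ℂ)‖ = 1 := by
  obtain ⟨n, hn, h⟩ := hχ
  exact norm_eq_one_of_pow_eq_one (by simpa using congrArg Units.val (h γ)) hn.ne'

lemma conj_char_mul_char (hχ : HasFiniteOrderChar Γ χ) (γ : Γ) :
    starRingEnd ℂ (χ γ : ℂ) * χ γ = 1 := by
  rw [conj_mul', norm_char_eq_one hχ]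
  simp

lemma norm_PTerm_le (hη : IsMultiplierSystem Γ η) (hχ : HasFiniteOrderChar Γ χ)
    (hm : m = 5 / 2 + j) (γ : Γ) {z : ℂ} (hz : z ∈ UH) :
    ‖PTerm Γ η χ m j k γ z‖ ≤ 2 ^ m * ‖lin γ z‖ ^ (-m) := by
  have hD := norm_pos_iff.2 (denom_ne_zero (γ : SL2Z) hz)
  rw [PTerm, norm_mul, norm_mul, RCLike.norm_conj, norm_char_eq_one hχ, one_mul,
    norm_eta_zpow hη hm γ hz, lin_eq_mul_denom _ hz, norm_mul,
    Real.mul_rpow (norm_nonneg _) hD.le, ← mul_assoc]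
  gcongr
  exact norm_fkm_le m k (im_act_pos _ hz)

lemma norm_poincareP_le (hη : IsMultiplierSystem Γ η) (hχ : HasFiniteOrderChar Γ χ)
    (hm : m = 5 / 2 + j) {z : ℂ} (hz : z ∈ UH) :
    ‖PoincareP Γ η χ m j k z‖ ≤ 2 ^ m * majorant m z := by
  have hs := summable_norm_lin_rpow (two_lt_of_eq_five_div_two_add hm) hz
  calc ‖PoincareP Γ η χ m j k z‖ ≤ ∑' γ : Γ, 2 ^ m * ‖lin γ z‖ ^ (-m) :=
        tsum_of_norm_bounded ((hs.comp_injective Subtype.val_injective).mul_left _).hasSum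
          fun γ => norm_PTerm_le hη hχ hm γ hz
    _ = 2 ^ m * ∑' γ : Γ, ‖lin γ z‖ ^ (-m) := tsum_mul_left
    _ ≤ 2 ^ m * majorant m z := by
        gcongr
        exact tsum_comp_le_tsum_of_inj hs (fun _ => by positivity) Subtype.val_injective

lemma differentiableOn_PTerm (hη : IsMultiplierSystem Γ η) (γ : Γ) :
    DifferentiableOn ℂ (PTerm Γ η χ m j k γ) UH := by
  intro z hz
  have hact : DifferentiableAt ℂ (act γ) z :=
    ((differentiableAt_id.const_mul _).add_const _).div
      ((differentiableAt_id.const_mul _).add_const _) (denom_ne_zero _ hz)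
  have hηγ : DifferentiableAt ℂ (η γ) z := (hη.holo γ).differentiableAt (isOpen_UH.mem_nhds hz)
  exact ((((differentiableAt_fkm m k (im_act_pos _ hz)).comp z hact).const_mul _).mul
    (hηγ.zpow (Or.inl (eta_ne_zero hη γ hz)))).differentiableWithinAt

lemma differentiableOn_poincareP (hη : IsMultiplierSystem Γ η) (hχ : HasFiniteOrderChar Γ χ)
    (hm : m = 5 / 2 + j) : DifferentiableOn ℂ (PoincareP Γ η χ m j k) UH := by
  have hm2 := two_lt_of_eq_five_div_two_add hm
  intro z₀ hz₀
  have hball : Metric.ball z₀ (z₀.im / 2) ⊆ UH := fun z hz =>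
    (half_pos hz₀).trans (im_half_lt_im_of_mem_ball hz)
  have hdiff := differentiableOn_tsum_of_summable_norm (F := fun γ => PTerm Γ η χ m j k γ)
    (((summable_norm_lin_rpow hm2 hz₀).comp_injective Subtype.val_injective).mul_left
      (2 ^ m * 2 ^ m))
    (fun γ => (differentiableOn_PTerm hη γ).mono hball) Metric.isOpen_ball
    fun γ z hz => (norm_PTerm_le hη hχ hm γ (hball hz)).trans <| by
      rw [mul_assoc]
      gcongr
      exact norm_lin_rpow_le_of_mem_ball (by linarith) _ hz₀ hz
  exact (hdiff.differentiableAt (Metric.ball_mem_nhds z₀ (half_pos hz₀))).differentiableWithinAt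

lemma PTerm_act (hη : IsMultiplierSystem Γ η) (hχ : HasFiniteOrderChar Γ χ) (γ δ : Γ) {z : ℂ}
    (hz : z ∈ UH) :
    PTerm Γ η χ m j k γ (act δ z) * η δ z ^ (-(5 + 2 * (j : ℤ)))
      = χ δ * PTerm Γ η χ m j k (γ * δ) z := by
  simp only [PTerm, Subgroup.coe_mul, act_mul _ _ hz, hη.cocycle γ δ z hz, mul_zpow, map_mul,
    Units.val_mul]
  linear_combination (-(starRingEnd ℂ (χ γ) * fkm m k (act γ (act δ z))
    * η γ (act δ z) ^ (-(5 + 2 * (j : ℤ))) * η δ z ^ (-(5 + 2 * (j : ℤ)))))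
    * conj_char_mul_char hχ δ

lemma poincareP_act (hη : IsMultiplierSystem Γ η) (hχ : HasFiniteOrderChar Γ χ) (δ : Γ) {z : ℂ}
    (hz : z ∈ UH) :
    PoincareP Γ η χ m j k (act δ z) * η δ z ^ (-(5 + 2 * (j : ℤ)))
      = χ δ * PoincareP Γ η χ m j k z := by
  rw [PoincareP, PoincareP, ← tsum_mul_right,
    ← (Equiv.mulRight δ).tsum_eq fun γ => PTerm Γ η χ m j k γ z, ← tsum_mul_left]
  exact tsum_congr fun γ => PTerm_act hη hχ γ δ hz

end Poincare

end PoincareSeries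

theorem stmt1_general (Γ : Subgroup SL2Z)
    (η : Γ → ℂ → ℂ) (hη : IsMultiplierSystem Γ η)
    (χ : Γ →* ℂˣ) (hχ : HasFiniteOrderChar Γ χ)
    (m : ℝ) (j : ℕ) (hm : m = 5 / 2 + j) (k : ℕ) :
    IsCuspForm Γ η χ m j (PoincareP Γ η χ m j k) := by
  obtain ⟨C, hC⟩ := PoincareSeries.exists_im_rpow_mul_majorant_le
    (PoincareSeries.two_lt_of_eq_five_div_two_add hm)
  refine ⟨PoincareSeries.differentiableOn_poincareP hη hχ hm,
    fun δ z hz => PoincareSeries.poincareP_act hη hχ δ hz, 2 ^ m * C, fun z hz => ?_⟩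
  calc ‖PoincareP Γ η χ m j k z‖ * z.im ^ (m / 2)
      ≤ 2 ^ m * PoincareSeries.majorant m z * z.im ^ (m / 2) :=
        mul_le_mul_of_nonneg_right (PoincareSeries.norm_poincareP_le hη hχ hm hz)
          (Real.rpow_nonneg (le_of_lt hz) _)
    _ = 2 ^ m * (z.im ^ (m / 2) * PoincareSeries.majorant m z) := by ring
    _ ≤ 2 ^ m * C := by
        gcongr
        exact hC z hz

theorem stmt1 (Γ : Subgroup SL2Z) (hΓ : Γ.FiniteIndex)
    (hI : ∀ γ : Γ, ((γ : SL2Z) : Matrix (Fin 2) (Fin 2) ℤ) ≠ -1)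
    (η : Γ → ℂ → ℂ) (hη : IsMultiplierSystem Γ η)
    (χ : Γ →* ℂˣ) (hχ : HasFiniteOrderChar Γ χ)
    (m : ℝ) (j : ℕ) (hm : m = 5 / 2 + j) (k : ℕ) :
    IsCuspForm Γ η χ m j (PoincareP Γ η χ m j k) :=
  stmt1_general Γ η hη χ hχ m j hm k
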